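/- arXiv:1710.11368 — 6 statements merged into one kernel-verified Lean document; each statement's English description precedes it below -/
import Mathlib

section
/- Let F be a complex Hilbert space and E₁, E₂ bounded operators on F. Then there exist an orthogonal projection P on F (P = P* = P²) and a unitary U on F such that E₁ = (I − P)U and E₂ = U*P if and only if E₁ and E₂ satisfy E₁E₂ = E₂E₁ = 0 and E₁E₁* + E₂*E₂ = E₁*E₁ + E₂E₂* = I_F. -/
open ContinuousLinearMap

/-- Berger–Coburn–Lebow lemma: bounded operators `E₁, E₂` on a complex Hilbert space `F`
have the form `E₁ = (I - P) U`, `E₂ = U* P` for an orthogonal projection `P` and a unitary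
`U` if and only if `E₁E₂ = E₂E₁ = 0` and `E₁E₁* + E₂*E₂ = E₁*E₁ + E₂E₂* = I`. -/
theorem bcl_partial_isometries {F : Type*} [NormedAddCommGroup F] [InnerProductSpace ℂ F]
    [CompleteSpace F] (E₁ E₂ : F →L[ℂ] F) :
    (∃ P U : F →L[ℂ] F,
        adjoint P = P ∧ P * P = P ∧
        adjoint U * U = 1 ∧ U * adjoint U = 1 ∧
        E₁ = (1 - P) * U ∧ E₂ = adjoint U * P) ↔
    (E₁ * E₂ = 0 ∧ E₂ * E₁ = 0 ∧
      E₁ * adjoint E₁ + adjoint E₂ * E₂ = 1 ∧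
      adjoint E₁ * E₁ + E₂ * adjoint E₂ = 1) := by
  simp only [← ContinuousLinearMap.star_eq_adjoint]
  constructor
  · rintro ⟨P, U, hP, hP2, hUU, hUU', hE1, hE2⟩
    have h1P : (1 - P) * (1 - P) = 1 - P := by
      rw [sub_mul, one_mul, mul_sub, mul_one, hP2, sub_self, sub_zero]
    have hsE1 : star E₁ = star U * (1 - P) := by
      rw [hE1, star_mul, star_sub, star_one, hP]
    have hsE2 : star E₂ = P * U := by
      rw [hE2, star_mul, hP, star_star]
    refine ⟨?_, ?_, ?_, ?_⟩
    · calc E₁ * E₂ = (1 - P) * (U * star U) * P := by rw [hE1, hE2]; noncomm_ring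
        _ = (1 - P) * P := by rw [hUU', mul_one]
        _ = 0 := by rw [sub_mul, one_mul, hP2, sub_self]
    · calc E₂ * E₁ = star U * (P * (1 - P)) * U := by rw [hE1, hE2]; noncomm_ring
        _ = star U * 0 * U := by rw [mul_sub, mul_one, hP2, sub_self]
        _ = 0 := by rw [mul_zero, zero_mul]
    · calc E₁ * star E₁ + star E₂ * E₂
          = (1 - P) * (U * star U) * (1 - P) + P * (U * star U) * P := by
            rw [hsE1, hsE2, hE1, hE2]; noncomm_ring
        _ = (1 - P) * (1 - P) + P * P := by rw [hUU']; noncomm_ring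
        _ = 1 := by rw [h1P, hP2, sub_add_cancel]
    · calc star E₁ * E₁ + E₂ * star E₂
          = star U * ((1 - P) * (1 - P) + P * P) * U := by
            rw [hsE1, hsE2, hE1, hE2]; noncomm_ring
        _ = star U * 1 * U := by rw [h1P, hP2, sub_add_cancel]
        _ = 1 := by rw [mul_one, hUU]
  · rintro ⟨h12, h21, hA, hB⟩
    have hs12 : star E₂ * star E₁ = 0 := by rw [← star_mul, h12, star_zero]
    have hs21 : star E₁ * star E₂ = 0 := by rw [← star_mul, h21, star_zero]
    have hE2s : E₂ * star E₂ = 1 - star E₁ * E₁ := by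
      rw [← hB]; abel
    refine ⟨star E₂ * E₂, E₁ + star E₂, ?_, ?_, ?_, ?_, ?_, ?_⟩
    · rw [star_mul, star_star]
    · calc (star E₂ * E₂) * (star E₂ * E₂)
          = star E₂ * (E₂ * star E₂) * E₂ := by noncomm_ring
        _ = star E₂ * (1 - star E₁ * E₁) * E₂ := by rw [hE2s]
        _ = star E₂ * E₂ - star E₂ * star E₁ * (E₁ * E₂) := by noncomm_ring
        _ = star E₂ * E₂ := by rw [h12, mul_zero, sub_zero]
    · calc star (E₁ + star E₂) * (E₁ + star E₂)
          = (star E₁ * E₁ + E₂ * star E₂) + (star E₁ * star E₂ + E₂ * E₁) := by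
            rw [star_add, star_star]; noncomm_ring
        _ = 1 := by rw [hB, hs21, h21, add_zero, add_zero]
    · calc (E₁ + star E₂) * star (E₁ + star E₂)
          = (E₁ * star E₁ + star E₂ * E₂) + (E₁ * E₂ + star E₂ * star E₁) := by
            rw [star_add, star_star]; noncomm_ring
        _ = 1 := by rw [hA, h12, hs12, add_zero, add_zero]
    · symm
      calc (1 - star E₂ * E₂) * (E₁ + star E₂)
          = E₁ + star E₂ - star E₂ * (E₂ * E₁) - star E₂ * (E₂ * star E₂) := by noncomm_ring
        _ = E₁ + star E₂ - star E₂ * 0 - star E₂ * (1 - star E₁ * E₁) := by rw [h21, hE2s]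
        _ = E₁ + star E₂ * star E₁ * E₁ := by noncomm_ring
        _ = E₁ := by rw [hs12, zero_mul, add_zero]
    · symm
      calc star (E₁ + star E₂) * (star E₂ * E₂)
          = star E₁ * star E₂ * E₂ + (E₂ * star E₂) * E₂ := by
            rw [star_add, star_star]; noncomm_ring
        _ = 0 * E₂ + (1 - star E₁ * E₁) * E₂ := by rw [hs21, hE2s]
        _ = E₂ - star E₁ * (E₁ * E₂) := by noncomm_ring
        _ = E₂ := by rw [h12, mul_zero, sub_zero]
end

section
/- Schäffer-type Andô dilation: Let T₁ and T₂ be commuting contractions on a complex Hilbert space H and T = T₁T₂. Let F := H ⊕ H, let P be the orthogonal projection of F onto the first summand, and suppose U is a unitary on F satisfying U(D_{T₁}T₂h, D_{T₂}h) = (D_{T₁}h, D_{T₂}T₁h) for all h ∈ H. Set λh := (D_{T₁}T₂h, D_{T₂}h), E₁ := (I − P)U, E₂ := U*P, and let K := H ⊕ ℓ²(ℕ, F). Then there exist bounded operators V₁, V₂ on K given by V₁(h, f) = (T₁h, g) with g(0) = E₂*(λh) + E₁(f(0)) and g(n+1) = E₂*(f(n)) + E₁(f(n+1)), and V₂(h,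 f) = (T₂h, g′) with g′(0) = E₁*(λh) + E₂(f(0)) and g′(n+1) = E₁*(f(n)) + E₂(f(n+1)); moreover V₁ and V₂ are commuting isometries and, with the isometric embedding Π : H → K, Πh := (h, 0), they satisfy Π ∘ T₁* = V₁* ∘ Π and Π ∘ T₂* = V₂* ∘ Π. -/
/-!
`V₁` and `V₂` are Schäffer-type operators `(h, f) ↦ (T h, E₂* (λ h :: f) + E₁ f)`, with the
roles of `E₁` and `E₂` exchanged for `V₂`. Since `P` is a projection and `U` is unitary,
`E₁ E₂ = E₂ E₁ = 0` and `E₂* E₂ + E₁ E₁* = E₁* E₁ + E₂ E₂* = 1`. These identities make each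
operator isometric, given `‖T₁ h‖² + ‖E₂* λ h‖² = ‖T₁ h‖² + ‖D_{T₁} h‖² = ‖h‖²` (and likewise for
`T₂`), and they give `V₁ V₂ (h, f) = (T₁ T₂ h, c h :: f)` with
`c h = E₂* λ (T₂ h) + E₁ E₁* λ h`; so `V₁` and `V₂` commute as soon as `c` is symmetric in the
two indices, which is exactly the defining property of `U`. Finally, the first coordinate of
`V_i x` is `T_i` applied to that of `x`, so `V_i*` maps `(h, 0)` to `(T_i* h, 0)`.
-/

open ContinuousLinearMap

/-- The Hilbert space direct sum `H ⊕ H`, realized as `WithLp 2 (H × H)`. -/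
noncomputable abbrev HilbertProd (H : Type*) : Type _ := WithLp 2 (H × H)

/-- The element `(x, y)` of the Hilbert space direct sum `H ⊕ H`. -/
noncomputable abbrev pairL2 {H : Type*} (x y : H) : HilbertProd H :=
  (WithLp.equiv 2 (H × H)).symm (x, y)

/-- The Schäffer space `K = H ⊕ ℓ²(ℕ, H ⊕ H)`. -/
noncomputable abbrev SchafferSpace (H : Type*) [NormedAddCommGroup H] : Type _ :=
  WithLp 2 (H × lp (fun _ : ℕ => HilbertProd H) 2)

/-- The element `(h, f)` of the Schäffer space `K = H ⊕ ℓ²(ℕ, H ⊕ H)`. -/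
noncomputable abbrev schafferPair {H : Type*} [NormedAddCommGroup H] (h : H)
    (f : lp (fun _ : ℕ => HilbertProd H) 2) : SchafferSpace H :=
  (WithLp.equiv 2 (H × lp (fun _ : ℕ => HilbertProd H) 2)).symm (h, f)

/-- The two components of an element of the Schäffer space. -/
noncomputable abbrev schafferFst {H : Type*} [NormedAddCommGroup H] (x : SchafferSpace H) : H :=
  ((WithLp.equiv 2 (H × lp (fun _ : ℕ => HilbertProd H) 2)) x).1

noncomputable abbrev schafferSnd {H : Type*} [NormedAddCommGroup H] (x : SchafferSpace H) :
    lp (fun _ : ℕ => HilbertProd H) 2 :=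
  ((WithLp.equiv 2 (H × lp (fun _ : ℕ => HilbertProd H) 2)) x).2

open scoped InnerProductSpace

structure IsSchafferPair {R : Type*} [Ring R] [StarRing R] (E₁ E₂ : R) : Prop where
  mul_eq_zero : E₁ * E₂ = 0
  mul_eq_zero' : E₂ * E₁ = 0
  star_mul_add_mul_star : star E₂ * E₂ + E₁ * star E₁ = 1
  star_mul_add_mul_star' : star E₁ * E₁ + E₂ * star E₂ = 1

namespace IsSchafferPair

variable {R : Type*} [Ring R] [StarRing R] {E₁ E₂ : R}

theorem symm (hE : IsSchafferPair E₁ E₂) : IsSchafferPair E₂ E₁ :=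
  ⟨hE.mul_eq_zero', hE.mul_eq_zero, hE.star_mul_add_mul_star', hE.star_mul_add_mul_star⟩

theorem of_isStarProjection {P U : R} (hP : IsStarProjection P) (hU : U ∈ unitary R) :
    IsSchafferPair ((1 - P) * U) (star U * P) := by
  have hUU : star U * U = 1 := Unitary.star_mul_self_of_mem hU
  have hUU' : U * star U = 1 := Unitary.mul_star_self_of_mem hU
  have hPP : P * P = P := hP.isIdempotentElem
  have hQQ : (1 - P) * (1 - P) = 1 - P := hP.one_sub.isIdempotentElem
  have hstar : star ((1 - P) * U) = star U * (1 - P) := by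
    rw [star_mul, hP.one_sub.isSelfAdjoint.star_eq]
  refine ⟨?_, ?_, ?_, ?_⟩
  · calc (1 - P) * U * (star U * P) = (1 - P) * (U * star U) * P := by noncomm_ring
      _ = 0 := by rw [hUU', mul_one, hP.one_sub_mul_self]
  · calc star U * P * ((1 - P) * U) = star U * (P * (1 - P)) * U := by noncomm_ring
      _ = 0 := by rw [hP.mul_one_sub_self, mul_zero, zero_mul]
  · calc star (star U * P) * (star U * P) + (1 - P) * U * star ((1 - P) * U)
        = P * (U * star U) * P + (1 - P) * (U * star U) * (1 - P) := by
          rw [hstar, star_mul, star_star, hP.isSelfAdjoint.star_eq]; noncomm_ring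
      _ = 1 := by rw [hUU', mul_one, mul_one, hPP, hQQ, add_sub_cancel]
  · calc star ((1 - P) * U) * ((1 - P) * U) + star U * P * star (star U * P)
        = star U * ((1 - P) * (1 - P) + P * P) * U := by
          rw [hstar, star_mul, star_star, hP.isSelfAdjoint.star_eq]; noncomm_ring
      _ = 1 := by rw [hPP, hQQ, sub_add_cancel, mul_one, hUU]

variable {𝕜 E : Type*} [RCLike 𝕜] [NormedAddCommGroup E] [InnerProductSpace 𝕜 E] [CompleteSpace E]
  {E₁ E₂ : E →L[𝕜] E}

theorem apply_apply (hE : IsSchafferPair E₁ E₂) (x : E) : E₁ (E₂ x) = 0 :=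
  congr($(hE.mul_eq_zero) x)

theorem adjoint_apply_adjoint_apply (hE : IsSchafferPair E₁ E₂) (x : E) :
    adjoint E₂ (adjoint E₁ x) = 0 := by
  have : adjoint E₂ * adjoint E₁ = 0 := by
    rw [← star_eq_adjoint, ← star_eq_adjoint, ← star_mul, hE.mul_eq_zero, star_zero]
  exact congr($this x)

theorem adjoint_apply_apply_add (hE : IsSchafferPair E₁ E₂) (x : E) :
    adjoint E₂ (E₂ x) + E₁ (adjoint E₁ x) = x :=
  congr($(hE.star_mul_add_mul_star) x)

theorem inner_adjoint_apply_apply (hE : IsSchafferPair E₁ E₂) (x y : E) :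
    ⟪adjoint E₂ x, E₁ y⟫_𝕜 = 0 := by
  rw [adjoint_inner_left, show E₂ (E₁ y) = 0 from congr($(hE.mul_eq_zero') y), inner_zero_right]

theorem inner_adjoint_add_inner (hE : IsSchafferPair E₁ E₂) (x y : E) :
    ⟪adjoint E₂ x, adjoint E₂ y⟫_𝕜 + ⟪E₁ x, E₁ y⟫_𝕜 = ⟪x, y⟫_𝕜 := by
  have hy : adjoint E₁ (E₁ y) + E₂ (adjoint E₂ y) = y := congr($(hE.star_mul_add_mul_star') y)
  rw [adjoint_inner_left, ← adjoint_inner_right E₁, ← inner_add_right, add_comm, hy]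

end IsSchafferPair

namespace lp

variable {𝕜 E E' : Type*} [RCLike 𝕜]

section Cons

variable [NormedAddCommGroup E]

def cons (a : E) (f : lp (fun _ : ℕ => E) 2) : lp (fun _ : ℕ => E) 2 :=
  ⟨fun n => Nat.casesOn n a f, memℓp_gen <| by
    have hf : Summable fun n => ‖f n‖ ^ (2 : ENNReal).toReal := (lp.memℓp f).summable (by norm_num)
    exact (summable_nat_add_iff 1).1 hf⟩

@[simp] theorem cons_zero (a : E) (f : lp (fun _ : ℕ => E) 2) : cons a f 0 = a := rfl

@[simp] theorem cons_succ (a : E) (f : lp (fun _ : ℕ => E) 2) (n : ℕ) :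
    cons a f (n + 1) = f n := rfl

theorem cons_add (a b : E) (f g : lp (fun _ : ℕ => E) 2) :
    cons (a + b) (f + g) = cons a f + cons b g := by
  ext (_ | n) <;> simp

theorem cons_smul [NormedSpace 𝕜 E] (c : 𝕜) (a : E) (f : lp (fun _ : ℕ => E) 2) :
    cons (c • a) (c • f) = c • cons a f := by
  ext (_ | n) <;> simp

end Cons

section Map

variable [NormedAddCommGroup E] [NormedSpace 𝕜 E] [NormedAddCommGroup E'] [NormedSpace 𝕜 E']
  {p : ENNReal}

def map (C : E →L[𝕜] E') : lp (fun _ : ℕ => E) p →ₗ[𝕜] lp (fun _ : ℕ => E') p where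
  toFun f := ⟨fun n => C (f n), ((lp.memℓp f).norm.const_mul ‖C‖).mono fun n => C.le_opNorm _⟩
  map_add' f g := by ext n; exact map_add C (f n) (g n)
  map_smul' c f := by ext n; exact map_smul C c (f n)

@[simp] theorem map_apply (C : E →L[𝕜] E') (f : lp (fun _ : ℕ => E) p) (n : ℕ) :
    map C f n = C (f n) := rfl

theorem map_cons (C : E →L[𝕜] E') (a : E) (f : lp (fun _ : ℕ => E) 2) :
    map C (cons a f) = cons (C a) (map C f) := by
  ext (_ | n) <;> rfl

end Map

variable [NormedAddCommGroup E] [InnerProductSpace 𝕜 E]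

theorem inner_cons_cons (a b : E) (f g : lp (fun _ : ℕ => E) 2) :
    ⟪cons a f, cons b g⟫_𝕜 = ⟪a, b⟫_𝕜 + ⟪f, g⟫_𝕜 := by
  rw [lp.inner_eq_tsum, lp.inner_eq_tsum,
    (lp.summable_inner (𝕜 := 𝕜) (cons a f) (cons b g)).tsum_eq_zero_add]
  simp

theorem inner_map_map_eq_zero {C D : E →L[𝕜] E} (h : ∀ u v, ⟪C u, D v⟫_𝕜 = 0)
    (f g : lp (fun _ : ℕ => E) 2) : ⟪map C f, map D g⟫_𝕜 = 0 := by
  simp [lp.inner_eq_tsum, h]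

theorem inner_map_map_add_inner_map_map {C D : E →L[𝕜] E}
    (h : ∀ u v, ⟪C u, C v⟫_𝕜 + ⟪D u, D v⟫_𝕜 = ⟪u, v⟫_𝕜) (f g : lp (fun _ : ℕ => E) 2) :
    ⟪map C f, map C g⟫_𝕜 + ⟪map D f, map D g⟫_𝕜 = ⟪f, g⟫_𝕜 := by
  rw [lp.inner_eq_tsum, lp.inner_eq_tsum, lp.inner_eq_tsum,
    ← (lp.summable_inner (𝕜 := 𝕜) (map C f) (map C g)).tsum_add
      (lp.summable_inner (𝕜 := 𝕜) (map D f) (map D g))]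
  exact tsum_congr fun n => h (f n) (g n)

end lp

section SchafferOperator

variable {𝕜 H E : Type*} [RCLike 𝕜] [NormedAddCommGroup H] [InnerProductSpace 𝕜 H]
  [NormedAddCommGroup E] [InnerProductSpace 𝕜 E] [CompleteSpace E]

noncomputable def schafferOp (T : H →L[𝕜] H) (Λ : H →L[𝕜] E) (E₁ E₂ : E →L[𝕜] E) :
    WithLp 2 (H × lp (fun _ : ℕ => E) 2) →ₗ[𝕜] WithLp 2 (H × lp (fun _ : ℕ => E) 2) where
  toFun x := WithLp.toLp 2
    (T x.fst, lp.map (adjoint E₂) (lp.cons (Λ x.fst) x.snd) + lp.map E₁ x.snd)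
  map_add' x y := by
    simp only [WithLp.add_fst, WithLp.add_snd, map_add, lp.cons_add, ← WithLp.toLp_add,
      Prod.mk_add_mk]
    abel_nf
  map_smul' c x := by
    simp only [WithLp.smul_fst, WithLp.smul_snd, map_smul, lp.cons_smul, smul_add,
      RingHom.id_apply, ← WithLp.toLp_smul, Prod.smul_mk]

theorem schafferOp_apply (T : H →L[𝕜] H) (Λ : H →L[𝕜] E) (E₁ E₂ : E →L[𝕜] E)
    (x : WithLp 2 (H × lp (fun _ : ℕ => E) 2)) :
    schafferOp T Λ E₁ E₂ x = WithLp.toLp 2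
      (T x.fst, lp.map (adjoint E₂) (lp.cons (Λ x.fst) x.snd) + lp.map E₁ x.snd) := rfl

variable {T T' : H →L[𝕜] H} {Λ : H →L[𝕜] E} {E₁ E₂ : E →L[𝕜] E}

theorem inner_schafferOp (hE : IsSchafferPair E₁ E₂)
    (hT : ∀ h k, ⟪T h, T k⟫_𝕜 + ⟪adjoint E₂ (Λ h), adjoint E₂ (Λ k)⟫_𝕜 = ⟪h, k⟫_𝕜)
    (x y : WithLp 2 (H × lp (fun _ : ℕ => E) 2)) :
    ⟪schafferOp T Λ E₁ E₂ x, schafferOp T Λ E₁ E₂ y⟫_𝕜 = ⟪x, y⟫_𝕜 := by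
  have hEA : ∀ u v, ⟪E₁ u, adjoint E₂ v⟫_𝕜 = 0 := fun u v => by
    rw [← inner_conj_symm, hE.inner_adjoint_apply_apply, map_zero]
  simp only [schafferOp_apply, WithLp.prod_inner_apply, WithLp.ofLp_fst, WithLp.ofLp_snd,
    inner_add_left, inner_add_right]
  rw [lp.inner_map_map_eq_zero hE.inner_adjoint_apply_apply, lp.inner_map_map_eq_zero hEA,
    lp.map_cons, lp.map_cons, lp.inner_cons_cons]
  linear_combination hT x.fst y.fst +
    lp.inner_map_map_add_inner_map_map hE.inner_adjoint_add_inner x.snd y.snd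

theorem schafferOp_schafferOp (hE : IsSchafferPair E₁ E₂)
    (x : WithLp 2 (H × lp (fun _ : ℕ => E) 2)) :
    schafferOp T Λ E₁ E₂ (schafferOp T' Λ E₂ E₁ x) = WithLp.toLp 2
      (T (T' x.fst), lp.cons (adjoint E₂ (Λ (T' x.fst)) + E₁ (adjoint E₁ (Λ x.fst))) x.snd) := by
  simp only [schafferOp_apply, WithLp.toLp_fst, WithLp.toLp_snd]
  congr 2
  ext (_ | _ | n) <;>
    simp [hE.apply_apply, hE.adjoint_apply_adjoint_apply, hE.adjoint_apply_apply_add]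

theorem schafferOp_comm {T₁ T₂ : H →L[𝕜] H} (hE : IsSchafferPair E₁ E₂)
    (hT : T₁ * T₂ = T₂ * T₁)
    (hΛ : ∀ h, adjoint E₂ (Λ (T₂ h)) + E₁ (adjoint E₁ (Λ h))
      = adjoint E₁ (Λ (T₁ h)) + E₂ (adjoint E₂ (Λ h))) :
    schafferOp T₁ Λ E₁ E₂ ∘ₗ schafferOp T₂ Λ E₂ E₁
      = schafferOp T₂ Λ E₂ E₁ ∘ₗ schafferOp T₁ Λ E₁ E₂ := by
  ext x : 1
  rw [LinearMap.comp_apply, LinearMap.comp_apply, schafferOp_schafferOp hE,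
    schafferOp_schafferOp hE.symm, hΛ,
    show T₁ (T₂ x.fst) = T₂ (T₁ x.fst) from congr($hT x.fst)]

end SchafferOperator

theorem adjoint_toLp_zero {𝕜 H F : Type*} [RCLike 𝕜] [NormedAddCommGroup H]
    [InnerProductSpace 𝕜 H] [CompleteSpace H] [NormedAddCommGroup F] [InnerProductSpace 𝕜 F]
    [CompleteSpace F] {T : H →L[𝕜] H} {V : WithLp 2 (H × F) →L[𝕜] WithLp 2 (H × F)}
    (hV : ∀ x, (V x).fst = T x.fst) (h : H) :
    adjoint V (WithLp.toLp 2 (h, 0)) = WithLp.toLp 2 (adjoint T h, 0) :=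
  ext_inner_right 𝕜 fun z => by simp [adjoint_inner_left, hV]

section Ando

variable {𝕜 H : Type*} [RCLike 𝕜] [NormedAddCommGroup H] [InnerProductSpace 𝕜 H]

theorem inner_add_inner_of_mul_self_eq_one_sub [CompleteSpace H] {T D : H →L[𝕜] H}
    (hD : IsSelfAdjoint D) (hDT : D * D = 1 - adjoint T * T) (h k : H) :
    ⟪T h, T k⟫_𝕜 + ⟪D h, D k⟫_𝕜 = ⟪h, k⟫_𝕜 := by
  have hDDk : D (D k) = k - adjoint T (T k) := congr($hDT k)
  rw [← adjoint_inner_right D h (D k), hD.adjoint_eq, hDDk, inner_sub_right, adjoint_inner_right,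
    add_sub_cancel]

noncomputable def pairL2Map (A B : H →L[𝕜] H) : H →L[𝕜] HilbertProd H :=
  (WithLp.prodContinuousLinearEquiv 2 𝕜 H H).symm.toContinuousLinearMap ∘L A.prod B

theorem inner_pairL2 (a b c d : H) :
    ⟪(pairL2 a b : HilbertProd H), pairL2 c d⟫_𝕜 = ⟪a, c⟫_𝕜 + ⟪b, d⟫_𝕜 := rfl

variable {P U : HilbertProd H →L[𝕜] HilbertProd H}

theorem one_sub_apply_pairL2 (hP : ∀ x y : H, P (pairL2 x y) = pairL2 x 0) (x y : H) :
    (1 - P) (pairL2 x y) = pairL2 0 y := by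
  change pairL2 x y - P (pairL2 x y) = _
  rw [hP]
  simp [pairL2, ← WithLp.toLp_sub]

variable [CompleteSpace H]

theorem isStarProjection_of_apply_pairL2 (hP : ∀ x y : H, P (pairL2 x y) = pairL2 x 0) :
    IsStarProjection P := by
  have hPz : ∀ z, P z = pairL2 z.fst 0 := fun z => hP z.fst z.snd
  refine ⟨ext fun z => ?_, LinearMap.IsSymmetric.isSelfAdjoint fun x y => ?_⟩
  · change P (P z) = P z
    rw [hPz z, hP]
  · simp [hPz]

variable {T₁ T₂ D₁ D₂ : H →L[𝕜] H}

theorem adjoint_adjoint_mul_apply_pairL2Map (hP : ∀ x y : H, P (pairL2 x y) = pairL2 x 0)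
    (hU : ∀ h, U (pairL2 (D₁ (T₂ h)) (D₂ h)) = pairL2 (D₁ h) (D₂ (T₁ h))) (h : H) :
    adjoint (adjoint U * P) (pairL2Map (D₁ * T₂) D₂ h) = pairL2 (D₁ h) 0 := by
  have hadj : adjoint (adjoint U * P) = P * U := by
    rw [← star_eq_adjoint, ← star_eq_adjoint, star_mul, star_star,
      (isStarProjection_of_apply_pairL2 hP).isSelfAdjoint.star_eq]
  rw [hadj]
  exact (congr_arg P (hU h)).trans (hP _ _)

theorem adjoint_one_sub_mul_apply_pairL2Map (hP : ∀ x y : H, P (pairL2 x y) = pairL2 x 0)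
    (h : H) : adjoint ((1 - P) * U) (pairL2Map (D₁ * T₂) D₂ h) = adjoint U (pairL2 0 (D₂ h)) := by
  have hadj : adjoint ((1 - P) * U) = adjoint U * (1 - P) := by
    rw [← star_eq_adjoint, ← star_eq_adjoint, star_mul,
      (isStarProjection_of_apply_pairL2 hP).one_sub.isSelfAdjoint.star_eq]
  rw [hadj]
  exact congr_arg (adjoint U) (one_sub_apply_pairL2 hP _ _)

theorem ando_commutation (hP : ∀ x y : H, P (pairL2 x y) = pairL2 x 0)
    (hUu : U ∈ unitary (HilbertProd H →L[𝕜] HilbertProd H))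
    (hU : ∀ h, U (pairL2 (D₁ (T₂ h)) (D₂ h)) = pairL2 (D₁ h) (D₂ (T₁ h))) (h : H) :
    adjoint (adjoint U * P) (pairL2Map (D₁ * T₂) D₂ (T₂ h))
        + ((1 - P) * U) (adjoint ((1 - P) * U) (pairL2Map (D₁ * T₂) D₂ h))
      = adjoint ((1 - P) * U) (pairL2Map (D₁ * T₂) D₂ (T₁ h))
        + (adjoint U * P) (adjoint (adjoint U * P) (pairL2Map (D₁ * T₂) D₂ h)) := by
  have hUUs : ∀ z, U (adjoint U z) = z := fun z => congr($(Unitary.mul_star_self_of_mem hUu) z)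
  have hUsU : ∀ z, adjoint U (U z) = z := fun z => congr($(Unitary.star_mul_self_of_mem hUu) z)
  have hadd : ∀ a b c d : H, pairL2 a b + pairL2 c d = pairL2 (a + c) (b + d) :=
    fun _ _ _ _ => rfl
  rw [adjoint_adjoint_mul_apply_pairL2Map hP hU, adjoint_adjoint_mul_apply_pairL2Map hP hU,
    adjoint_one_sub_mul_apply_pairL2Map hP, adjoint_one_sub_mul_apply_pairL2Map hP,
    mul_apply_eq_comp, mul_apply_eq_comp, hUUs, one_sub_apply_pairL2 hP, hP,
    ← map_add (adjoint U), hadd, hadd, add_zero, zero_add, add_zero, zero_add, ← hU, hUsU]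

theorem ando_inner_fst (hP : ∀ x y : H, P (pairL2 x y) = pairL2 x 0)
    (hU : ∀ h, U (pairL2 (D₁ (T₂ h)) (D₂ h)) = pairL2 (D₁ h) (D₂ (T₁ h)))
    (hD₁ : IsSelfAdjoint D₁) (hD₁T₁ : D₁ * D₁ = 1 - adjoint T₁ * T₁) (h k : H) :
    ⟪T₁ h, T₁ k⟫_𝕜 + ⟪adjoint (adjoint U * P) (pairL2Map (D₁ * T₂) D₂ h),
      adjoint (adjoint U * P) (pairL2Map (D₁ * T₂) D₂ k)⟫_𝕜 = ⟪h, k⟫_𝕜 := by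
  rw [adjoint_adjoint_mul_apply_pairL2Map hP hU, adjoint_adjoint_mul_apply_pairL2Map hP hU,
    inner_pairL2, inner_zero_left, add_zero, inner_add_inner_of_mul_self_eq_one_sub hD₁ hD₁T₁]

theorem ando_inner_snd (hP : ∀ x y : H, P (pairL2 x y) = pairL2 x 0)
    (hUu : U ∈ unitary (HilbertProd H →L[𝕜] HilbertProd H))
    (hD₂ : IsSelfAdjoint D₂) (hD₂T₂ : D₂ * D₂ = 1 - adjoint T₂ * T₂) (h k : H) :
    ⟪T₂ h, T₂ k⟫_𝕜 + ⟪adjoint ((1 - P) * U) (pairL2Map (D₁ * T₂) D₂ h),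
      adjoint ((1 - P) * U) (pairL2Map (D₁ * T₂) D₂ k)⟫_𝕜 = ⟪h, k⟫_𝕜 := by
  have hUu' : adjoint U ∈ unitary (HilbertProd H →L[𝕜] HilbertProd H) := Unitary.star_mem hUu
  rw [adjoint_one_sub_mul_apply_pairL2Map hP, adjoint_one_sub_mul_apply_pairL2Map hP,
    inner_map_map_of_mem_unitary hUu', inner_pairL2, inner_zero_left, zero_add,
    inner_add_inner_of_mul_self_eq_one_sub hD₂ hD₂T₂]

end Ando

theorem schaffer_ando_dilation_general {H : Type*} [NormedAddCommGroup H] [InnerProductSpace ℂ H]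
    [CompleteSpace H] (T₁ T₂ D₁ D₂ : H →L[ℂ] H)
    (hcomm : T₁ * T₂ = T₂ * T₁)
    (hD₁pos : D₁.IsPositive) (hD₁sq : D₁ * D₁ = 1 - adjoint T₁ * T₁)
    (hD₂pos : D₂.IsPositive) (hD₂sq : D₂ * D₂ = 1 - adjoint T₂ * T₂)
    (P U : HilbertProd H →L[ℂ] HilbertProd H)
    (hP : ∀ x y : H, P (pairL2 x y) = pairL2 x 0)
    (hUiso : adjoint U * U = 1) (hUco : U * adjoint U = 1)
    (hU : ∀ h : H, U (pairL2 (D₁ (T₂ h)) (D₂ h)) = pairL2 (D₁ h) (D₂ (T₁ h)))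
    (lam : H → HilbertProd H) (hlam : ∀ h : H, lam h = pairL2 (D₁ (T₂ h)) (D₂ h))
    (E₁ E₂ : HilbertProd H →L[ℂ] HilbertProd H)
    (hE₁ : E₁ = (1 - P) * U) (hE₂ : E₂ = adjoint U * P) :
    ∃ V₁ V₂ : SchafferSpace H →L[ℂ] SchafferSpace H,
      (∀ (h : H) (f : lp (fun _ : ℕ => HilbertProd H) 2),
        schafferFst (V₁ (schafferPair h f)) = T₁ h ∧
        schafferSnd (V₁ (schafferPair h f)) 0 = adjoint E₂ (lam h) + E₁ (f 0) ∧
        ∀ n : ℕ, schafferSnd (V₁ (schafferPair h f)) (n + 1)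
          = adjoint E₂ (f n) + E₁ (f (n + 1))) ∧
      (∀ (h : H) (f : lp (fun _ : ℕ => HilbertProd H) 2),
        schafferFst (V₂ (schafferPair h f)) = T₂ h ∧
        schafferSnd (V₂ (schafferPair h f)) 0 = adjoint E₁ (lam h) + E₂ (f 0) ∧
        ∀ n : ℕ, schafferSnd (V₂ (schafferPair h f)) (n + 1)
          = adjoint E₁ (f n) + E₂ (f (n + 1))) ∧
      adjoint V₁ * V₁ = 1 ∧ adjoint V₂ * V₂ = 1 ∧ V₁ * V₂ = V₂ * V₁ ∧
      ∃ Pi : H →ₗᵢ[ℂ] SchafferSpace H,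
        (∀ h : H, Pi h = schafferPair h 0) ∧
        (∀ h : H, Pi (adjoint T₁ h) = adjoint V₁ (Pi h)) ∧
        (∀ h : H, Pi (adjoint T₂ h) = adjoint V₂ (Pi h)) := by
  subst hE₁ hE₂
  have hUu : U ∈ unitary (HilbertProd H →L[ℂ] HilbertProd H) := ⟨hUiso, hUco⟩
  have hE : IsSchafferPair ((1 - P) * U) (adjoint U * P) :=
    .of_isStarProjection (isStarProjection_of_apply_pairL2 hP) hUu
  let Λ := pairL2Map (D₁ * T₂) D₂
  let V₁ := ((schafferOp T₁ Λ _ _).isometryOfInner <| inner_schafferOp hE <|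
    ando_inner_fst hP hU hD₁pos.isSelfAdjoint hD₁sq).toContinuousLinearMap
  let V₂ := ((schafferOp T₂ Λ _ _).isometryOfInner <| inner_schafferOp hE.symm <|
    ando_inner_snd hP hUu hD₂pos.isSelfAdjoint hD₂sq).toContinuousLinearMap
  let Pi : H →ₗᵢ[ℂ] SchafferSpace H :=
    ⟨(WithLp.linearEquiv 2 ℂ _).symm.toLinearMap ∘ₗ LinearMap.inl ℂ H _,
      WithLp.norm_toLp_fst 2 H (lp (fun _ : ℕ => HilbertProd H) 2)⟩
  refine ⟨V₁, V₂, fun h f => ⟨rfl, by rw [hlam]; rfl, fun n => rfl⟩,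
    fun h f => ⟨rfl, by rw [hlam]; rfl, fun n => rfl⟩, LinearIsometry.adjoint_comp_self _,
    LinearIsometry.adjoint_comp_self _, ?_, Pi, fun _ => rfl,
    fun h => (adjoint_toLp_zero (V := V₁) (T := T₁) (fun _ => rfl) h).symm,
    fun h => (adjoint_toLp_zero (V := V₂) (T := T₂) (fun _ => rfl) h).symm⟩
  exact ContinuousLinearMap.ext <| LinearMap.congr_fun <|
    schafferOp_comm hE hcomm (ando_commutation hP hUu hU)

/-- **Schäffer-type Andô dilation.**  With the data `P, U, λ, E₁, E₂` of an Andô tuple for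
commuting contractions `(T₁, T₂)`, there are commuting isometries `V₁, V₂` on
`K = H ⊕ ℓ²(ℕ, H ⊕ H)` given by the explicit Schäffer-type formulas, and with the isometric
embedding `Π h = (h, 0)` they dilate `(T₁, T₂)`: `Π T₁* = V₁* Π` and `Π T₂* = V₂* Π`. -/
theorem schaffer_ando_dilation {H : Type*} [NormedAddCommGroup H] [InnerProductSpace ℂ H]
    [CompleteSpace H] (T₁ T₂ D₁ D₂ D : H →L[ℂ] H)
    (hT₁ : ‖T₁‖ ≤ 1) (hT₂ : ‖T₂‖ ≤ 1) (hcomm : T₁ * T₂ = T₂ * T₁)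
    (hD₁pos : D₁.IsPositive) (hD₁sq : D₁ * D₁ = 1 - adjoint T₁ * T₁)
    (hD₂pos : D₂.IsPositive) (hD₂sq : D₂ * D₂ = 1 - adjoint T₂ * T₂)
    (hDpos : D.IsPositive) (hDsq : D * D = 1 - adjoint (T₁ * T₂) * (T₁ * T₂))
    (P U : HilbertProd H →L[ℂ] HilbertProd H)
    (hP : ∀ x y : H, P (pairL2 x y) = pairL2 x 0)
    (hUiso : adjoint U * U = 1) (hUco : U * adjoint U = 1)
    (hU : ∀ h : H, U (pairL2 (D₁ (T₂ h)) (D₂ h)) = pairL2 (D₁ h) (D₂ (T₁ h)))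
    (lam : H → HilbertProd H) (hlam : ∀ h : H, lam h = pairL2 (D₁ (T₂ h)) (D₂ h))
    (E₁ E₂ : HilbertProd H →L[ℂ] HilbertProd H)
    (hE₁ : E₁ = (1 - P) * U) (hE₂ : E₂ = adjoint U * P) :
    ∃ V₁ V₂ : SchafferSpace H →L[ℂ] SchafferSpace H,
      (∀ (h : H) (f : lp (fun _ : ℕ => HilbertProd H) 2),
        schafferFst (V₁ (schafferPair h f)) = T₁ h ∧
        schafferSnd (V₁ (schafferPair h f)) 0 = adjoint E₂ (lam h) + E₁ (f 0) ∧
        ∀ n : ℕ, schafferSnd (V₁ (schafferPair h f)) (n + 1)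
          = adjoint E₂ (f n) + E₁ (f (n + 1))) ∧
      (∀ (h : H) (f : lp (fun _ : ℕ => HilbertProd H) 2),
        schafferFst (V₂ (schafferPair h f)) = T₂ h ∧
        schafferSnd (V₂ (schafferPair h f)) 0 = adjoint E₁ (lam h) + E₂ (f 0) ∧
        ∀ n : ℕ, schafferSnd (V₂ (schafferPair h f)) (n + 1)
          = adjoint E₁ (f n) + E₂ (f (n + 1))) ∧
      adjoint V₁ * V₁ = 1 ∧ adjoint V₂ * V₂ = 1 ∧ V₁ * V₂ = V₂ * V₁ ∧
      ∃ Pi : H →ₗᵢ[ℂ] SchafferSpace H,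
        (∀ h : H, Pi h = schafferPair h 0) ∧
        (∀ h : H, Pi (adjoint T₁ h) = adjoint V₁ (Pi h)) ∧
        (∀ h : H, Pi (adjoint T₂ h) = adjoint V₂ (Pi h)) :=
  schaffer_ando_dilation_general T₁ T₂ D₁ D₂ hcomm hD₁pos hD₁sq hD₂pos hD₂sq P U hP hUiso hUco hU
    lam hlam E₁ E₂ hE₁ hE₂
end

section
/- Let V₁ and V₂ be commuting isometries on a complex Hilbert space H and V = V₁V₂. Then there exist a complex Hilbert space K, a linear isometry J : H → K, and commuting unitaries Y₁, Y₂ on K such that Y₁ ∘ J = J ∘ V₁, Y₂ ∘ J = J ∘ V₂, and the unitary Y := Y₁Y₂ is a minimal unitary extension of V, i.e. Y ∘ J = J ∘ V and K equals the closed linear span of { (Y*)ⁿ(Jh) : n ∈ ℕ, h ∈ H }. -/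
/-!
Put `V = V₁V₂` and let `D` be the direct limit of `H →V H →V ⋯`: the class of `(n, h)` stands
for `V⁻ⁿh`, so that `(n, h) ~ (n + 1, Vh)`, and `J h` is the class of `(0, h)`. Inner products
pass to the limit because `V` is isometric. Each `Vᵢ` commutes with `V` and acts levelwise on `D`;
as `V₁V₂ = V₂V₁ = V`, the map `(n, h) ↦ (n + 1, V₂h)` inverts `V₁` on `D`, and symmetrically for
`V₂`. These isometric automorphisms of `D` extend to unitaries `Y₁, Y₂` of the completion `K` of
`D`. Finally `Y* = (Y₁Y₂)⁻¹` sends the class of `(n, h)` to that of `(n + 1, h)`, so `D` is the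
set of all `(Y*)ⁿ J h`, and it is dense in `K`.
-/

open ContinuousLinearMap UniformSpace

universe u

noncomputable section

namespace DirectLimit

variable {𝕜 ι : Type*} [RCLike 𝕜] [Preorder ι] [IsDirectedOrder ι]
  {G : ι → Type*} [∀ i, NormedAddCommGroup (G i)] [∀ i, InnerProductSpace 𝕜 (G i)]
  {f : ∀ i j, i ≤ j → G i →ₗᵢ[𝕜] G j} [DirectedSystem G (f · · ·)]

instance : Inner 𝕜 (DirectLimit G f) where
  inner := DirectLimit.lift₂ f f (fun _ ↦ inner 𝕜) fun _ _ _ x y ↦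
    ((f _ _ _).inner_map_map x y).symm

theorem inner_mk (i : ι) (x y : G i) :
    inner 𝕜 (⟦⟨i, x⟩⟧ : DirectLimit G f) ⟦⟨i, y⟩⟧ = inner 𝕜 x y :=
  lift₂_def ..

variable [Nonempty ι]

instance innerProductSpaceCore : InnerProductSpace.Core 𝕜 (DirectLimit G f) where
  conj_inner_symm := DirectLimit.induction₂ _ fun i x y ↦ by
    simp only [inner_mk, inner_conj_symm]
  re_inner_nonneg := DirectLimit.induction _ fun i x ↦ by
    rw [inner_mk]
    exact inner_self_nonneg
  definite := DirectLimit.induction _ fun i x hx ↦ by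
    rw [inner_mk, inner_self_eq_zero] at hx
    rw [hx, zero_def i]
  add_left := DirectLimit.induction₃ _ fun i x y z ↦ by
    simp only [add_def, inner_mk, inner_add_left]
  smul_left := DirectLimit.induction₂ _ fun i x y r ↦ by
    simp only [smul_def, inner_mk, inner_smul_left]

instance : NormedAddCommGroup (DirectLimit G f) :=
  InnerProductSpace.Core.toNormedAddCommGroup (cd := innerProductSpaceCore)

instance : InnerProductSpace 𝕜 (DirectLimit G f) :=
  InnerProductSpace.ofCore _

theorem norm_mk (i : ι) (x : G i) : ‖(⟦⟨i, x⟩⟧ : DirectLimit G f)‖ = ‖x‖ := by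
  rw [norm_eq_sqrt_re_inner (𝕜 := 𝕜), norm_eq_sqrt_re_inner (𝕜 := 𝕜), inner_mk]

variable (f) in
def ofₗᵢ (i : ι) : G i →ₗᵢ[𝕜] DirectLimit G f where
  toFun x := ⟦⟨i, x⟩⟧
  map_add' x y := (add_def i x y).symm
  map_smul' c x := (smul_def i x c).symm
  norm_map' := norm_mk i

end DirectLimit

namespace LinearIsometry

variable {𝕜 E : Type*} [RCLike 𝕜] [NormedAddCommGroup E] [InnerProductSpace 𝕜 E]
  (V : E →ₗᵢ[𝕜] E)

def powSystem (i j : ℕ) (_ : i ≤ j) : E →ₗᵢ[𝕜] E := V ^ (j - i)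

instance : DirectedSystem (fun _ : ℕ ↦ E) (V.powSystem · · ·) where
  map_self _ x := by simp [powSystem]
  map_map k j i hij hjk x := by
    simp only [powSystem, coe_pow, ← Function.iterate_add_apply]
    congr 1
    omega

abbrev PowLimit : Type _ := DirectLimit (fun _ : ℕ ↦ E) V.powSystem

namespace PowLimit

theorem mk_succ_apply (n : ℕ) (x : E) : (⟦⟨n + 1, V x⟩⟧ : V.PowLimit) = ⟦⟨n, x⟩⟧ := by
  simpa [powSystem] using DirectLimit.mk_apply (f := V.powSystem) n (n + 1) x n.le_succ

variable {V}

def map (A : E →ₗᵢ[𝕜] E) (hA : Commute A V) : V.PowLimit →ₗᵢ[𝕜] V.PowLimit where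
  toFun := DirectLimit.map _ _ (fun _ ↦ A) fun _ _ _ x ↦ congr($((hA.pow_right _).eq.symm) x)
  map_add' := DirectLimit.induction₂ _ fun i x y ↦ by
    simp only [DirectLimit.add_def, DirectLimit.map_def, map_add]
  map_smul' c := DirectLimit.induction _ fun i x ↦ by
    simp only [DirectLimit.smul_def, DirectLimit.map_def, map_smul, RingHom.id_apply]
  norm_map' := DirectLimit.induction _ fun i x ↦ by
    simp only [LinearMap.coe_mk, AddHom.coe_mk, DirectLimit.map_def, DirectLimit.norm_mk,
      A.norm_map]

variable (V) in
def shift : V.PowLimit →ₗᵢ[𝕜] V.PowLimit where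
  toFun := DirectLimit.lift _ (fun n x ↦ ⟦⟨n + 1, x⟩⟧) fun i j hij x ↦ by
    have : V.powSystem i j hij = V.powSystem (i + 1) (j + 1) (by omega) := by
      simp [powSystem]
    rw [this, DirectLimit.mk_apply]
  map_add' := DirectLimit.induction₂ _ fun i x y ↦ by
    simp only [DirectLimit.add_def, DirectLimit.lift_def]
  map_smul' c := DirectLimit.induction _ fun i x ↦ by
    simp only [DirectLimit.smul_def, DirectLimit.lift_def, RingHom.id_apply]
  norm_map' := DirectLimit.induction _ fun i x ↦ by
    simp only [LinearMap.coe_mk, AddHom.coe_mk, DirectLimit.lift_def, DirectLimit.norm_mk]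

@[simp]
theorem shift_mk (n : ℕ) (x : E) : shift V ⟦⟨n, x⟩⟧ = ⟦⟨n + 1, x⟩⟧ := rfl

def equivOfMulEq (A B : E →ₗᵢ[𝕜] E) (hAB : A * B = V) (hBA : B * A = V) :
    V.PowLimit ≃ₗᵢ[𝕜] V.PowLimit :=
  have hA : Commute A V := hBA ▸ Commute.mul_right (hAB.trans hBA.symm) (Commute.refl A)
  have hB : Commute B V := hAB ▸ Commute.mul_right (hBA.trans hAB.symm) (Commute.refl B)
  { map A hA with
    invFun := shift V ∘ map B hB
    left_inv := DirectLimit.induction _ fun n x ↦ by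
      change (⟦⟨n + 1, (B * A) x⟩⟧ : V.PowLimit) = _
      rw [hBA, mk_succ_apply]
    right_inv := DirectLimit.induction _ fun n x ↦ by
      change (⟦⟨n + 1, (A * B) x⟩⟧ : V.PowLimit) = _
      rw [hAB, mk_succ_apply] }

@[simp]
theorem equivOfMulEq_mk (A B : E →ₗᵢ[𝕜] E) (hAB : A * B = V) (hBA : B * A = V) (n : ℕ) (x : E) :
    equivOfMulEq A B hAB hBA ⟦⟨n, x⟩⟧ = ⟦⟨n, A x⟩⟧ := rfl

@[simp]
theorem equivOfMulEq_symm_mk (A B : E →ₗᵢ[𝕜] E) (hAB : A * B = V) (hBA : B * A = V) (n : ℕ)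
    (x : E) : (equivOfMulEq A B hAB hBA).symm ⟦⟨n, x⟩⟧ = ⟦⟨n + 1, B x⟩⟧ := rfl

theorem topologicalClosure_span_orbit_eq_top
    (T : Completion V.PowLimit →L[𝕜] Completion V.PowLimit)
    (hT : ∀ z : V.PowLimit, T z = (shift V z : Completion V.PowLimit)) :
    (Submodule.span 𝕜 {y | ∃ (n : ℕ) (x : E),
      y = (T ^ n) (⟦⟨0, x⟩⟧ : V.PowLimit)}).topologicalClosure = ⊤ := by
  have hT_pow : ∀ n x, (T ^ n) (⟦⟨0, x⟩⟧ : V.PowLimit) =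
      ((⟦⟨n, x⟩⟧ : V.PowLimit) : Completion V.PowLimit) := by
    intro n x
    induction n with
    | zero => rfl
    | succ n ih => rw [pow_succ', mul_apply_eq_comp, ih, hT, shift_mk]
  rw [← Submodule.dense_iff_topologicalClosure_eq_top]
  refine Completion.denseRange_coe.mono ?_
  rintro _ ⟨z, rfl⟩
  induction z using DirectLimit.induction with
  | ih n x => exact Submodule.subset_span ⟨n, x, (hT_pow n x).symm⟩

end PowLimit

end LinearIsometry

namespace LinearIsometryEquiv

section completion

variable {𝕜 E F : Type*} [NormedField 𝕜] [SeminormedAddCommGroup E] [NormedSpace 𝕜 E]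
  [SeminormedAddCommGroup F] [NormedSpace 𝕜 F]

def completion (e : E ≃ₗᵢ[𝕜] F) : Completion E ≃ₗᵢ[𝕜] Completion F :=
  let f := (e : E →L[𝕜] F).completion
  let g := (e.symm : F →L[𝕜] E).completion
  { f with
    invFun := g
    left_inv := Completion.ext' (g.continuous.comp f.continuous) continuous_id fun x ↦ by
      simp [f, g]
    right_inv := Completion.ext' (f.continuous.comp g.continuous) continuous_id fun x ↦ by
      simp [f, g]
    norm_map' := Completion.ext' (continuous_norm.comp f.continuous) continuous_norm fun x ↦ by
      simp [f] }

@[simp]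
theorem completion_coe (e : E ≃ₗᵢ[𝕜] F) (x : E) : e.completion x = e x :=
  (e : E →L[𝕜] F).completion_apply_coe x

@[simp]
theorem symm_completion (e : E ≃ₗᵢ[𝕜] F) : e.completion.symm = e.symm.completion := rfl

theorem commute_completion {e₁ e₂ : E ≃ₗᵢ[𝕜] E} (h : Commute e₁ e₂) :
    Commute (e₁.completion : Completion E →L[𝕜] Completion E) e₂.completion :=
  ContinuousLinearMap.ext <| Completion.ext' (by fun_prop) (by fun_prop) fun x ↦ by
    simpa using congr(($h x : Completion E))

end completion

variable {𝕜 H : Type*} [RCLike 𝕜] [NormedAddCommGroup H] [InnerProductSpace 𝕜 H]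
  [CompleteSpace H]

theorem adjoint_mul_self (e : H ≃ₗᵢ[𝕜] H) : adjoint (e : H →L[𝕜] H) * e = 1 := by
  ext
  simp

theorem mul_adjoint_self (e : H ≃ₗᵢ[𝕜] H) : (e : H →L[𝕜] H) * adjoint (e : H →L[𝕜] H) = 1 := by
  ext
  simp

end LinearIsometryEquiv

end

/-- Commuting isometries `V₁, V₂` with `V = V₁V₂` extend to commuting unitaries `Y₁, Y₂`
such that `Y = Y₁Y₂` is a *minimal* unitary extension of `V`:
`Y ∘ J = J ∘ V` and `K` is the closed linear span of `{ (Y*)ⁿ (J h) }`. -/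
theorem commuting_isometries_extend_to_unitaries {H : Type u} [NormedAddCommGroup H]
    [InnerProductSpace ℂ H] [CompleteSpace H] (V₁ V₂ : H →L[ℂ] H)
    (hV₁ : adjoint V₁ * V₁ = 1) (hV₂ : adjoint V₂ * V₂ = 1) (hcomm : V₁ * V₂ = V₂ * V₁) :
    ∃ (K : Type u) (_ : NormedAddCommGroup K) (_ : InnerProductSpace ℂ K) (_ : CompleteSpace K)
      (J : H →ₗᵢ[ℂ] K) (Y₁ Y₂ : K →L[ℂ] K),
        adjoint Y₁ * Y₁ = 1 ∧ Y₁ * adjoint Y₁ = 1 ∧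
        adjoint Y₂ * Y₂ = 1 ∧ Y₂ * adjoint Y₂ = 1 ∧
        Y₁ * Y₂ = Y₂ * Y₁ ∧
        (∀ h : H, Y₁ (J h) = J (V₁ h)) ∧
        (∀ h : H, Y₂ (J h) = J (V₂ h)) ∧
        (∀ h : H, (Y₁ * Y₂) (J h) = J ((V₁ * V₂) h)) ∧
        (Submodule.span ℂ
            {x : K | ∃ (n : ℕ) (h : H), x = ((adjoint (Y₁ * Y₂)) ^ n) (J h)}).topologicalClosure
          = ⊤ := by
  let W₁ : H →ₗᵢ[ℂ] H := ⟨V₁, V₁.norm_map_iff_adjoint_comp_self.mpr hV₁⟩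
  let W₂ : H →ₗᵢ[ℂ] H := ⟨V₂, V₂.norm_map_iff_adjoint_comp_self.mpr hV₂⟩
  have hW : W₂ * W₁ = W₁ * W₂ := LinearIsometry.ext fun x ↦ congr($hcomm.symm x)
  let D := (W₁ * W₂).PowLimit
  let U₁ := LinearIsometry.PowLimit.equivOfMulEq W₁ W₂ rfl hW
  let U₂ := LinearIsometry.PowLimit.equivOfMulEq W₂ W₁ hW rfl
  have hU : Commute U₁ U₂ := LinearIsometryEquiv.ext <| DirectLimit.induction _ fun n x ↦ by
    simpa [U₁, U₂] using congr((⟦⟨n, $hW.symm x⟩⟧ : D))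
  let J := Completion.toComplₗᵢ.comp (DirectLimit.ofₗᵢ (W₁ * W₂).powSystem 0)
  let Y₁ : Completion D →L[ℂ] Completion D := U₁.completion
  let Y₂ : Completion D →L[ℂ] Completion D := U₂.completion
  have hYJ₁ : ∀ h, Y₁ (J h) = J (V₁ h) := fun h ↦ U₁.completion_coe _
  have hYJ₂ : ∀ h, Y₂ (J h) = J (V₂ h) := fun h ↦ U₂.completion_coe _
  have hY_adjoint : ∀ z : D,
      adjoint (Y₁ * Y₂) z = (LinearIsometry.PowLimit.shift (W₁ * W₂) z : Completion D) :=
    DirectLimit.induction _ fun n h ↦ by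
      rw [← star_eq_adjoint, star_mul, LinearIsometryEquiv.star_eq_symm,
        LinearIsometryEquiv.star_eq_symm]
      simpa [U₁, U₂] using LinearIsometry.PowLimit.mk_succ_apply (W₁ * W₂) (n + 1) h
  exact ⟨Completion D, inferInstance, inferInstance, inferInstance, J, Y₁, Y₂,
    U₁.completion.adjoint_mul_self, U₁.completion.mul_adjoint_self,
    U₂.completion.adjoint_mul_self, U₂.completion.mul_adjoint_self,
    LinearIsometryEquiv.commute_completion hU, hYJ₁, hYJ₂,
    fun h ↦ (congrArg Y₁ (hYJ₂ h)).trans (hYJ₁ _),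
    LinearIsometry.PowLimit.topologicalClosure_span_orbit_eq_top _ hY_adjoint⟩
end

section
/- Let T₁ and T₂ be commuting contractions on a complex Hilbert space H, T = T₁T₂, and let A be the positive operator with TⁿT*ⁿ → A in the strong operator topology. Then T₁ A T₁* = A and T₂ A T₂* = A. -/
/-!
For `T = S R` with `S, R` commuting contractions, `⟪A x, x⟫ = lim ‖T*ⁿ x‖²`. Writing
`T* = R* S*` and commuting `S*` and `R*` past `T*ⁿ` gives the sandwich
`‖T*ⁿ⁺¹ x‖ ≤ ‖T*ⁿ S* x‖ ≤ ‖T*ⁿ x‖`, so `⟪S A S* x, x⟫ = lim ‖T*ⁿ S* x‖² = ⟪A x, x⟫`.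
Both `S A S*` and `A` are self-adjoint, and a self-adjoint operator is determined by its
quadratic form.
-/

open ContinuousLinearMap Filter

open Topology RCLike

namespace ContinuousLinearMap

section Normed

variable {𝕜 E : Type*} [NontriviallyNormedField 𝕜] [SeminormedAddCommGroup E] [NormedSpace 𝕜 E]

theorem norm_apply_le_of_norm_le_one {U : E →L[𝕜] E} (hU : ‖U‖ ≤ 1) (x : E) : ‖U x‖ ≤ ‖x‖ := by
  simpa using U.le_of_opNorm_le hU x

variable {U V : E →L[𝕜] E}

theorem norm_pow_apply_le_of_commute (hU : ‖U‖ ≤ 1) (hUV : Commute U V) (n : ℕ) (x : E) :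
    ‖((V * U) ^ n) (U x)‖ ≤ ‖((V * U) ^ n) x‖ := by
  have hcomm : Commute ((V * U) ^ n) U := ((hUV.symm.mul_left (.refl U)).pow_left n)
  calc ‖((V * U) ^ n) (U x)‖ = ‖U (((V * U) ^ n) x)‖ := by
        rw [← mul_apply_eq_comp, hcomm.eq, mul_apply_eq_comp]
    _ ≤ ‖((V * U) ^ n) x‖ := norm_apply_le_of_norm_le_one hU _

theorem norm_pow_succ_apply_le_of_commute (hV : ‖V‖ ≤ 1) (hUV : Commute U V) (n : ℕ) (x : E) :
    ‖((V * U) ^ (n + 1)) x‖ ≤ ‖((V * U) ^ n) (U x)‖ := by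
  have hcomm : Commute V ((V * U) ^ n) := ((Commute.refl V).mul_right hUV.symm).pow_right n
  calc ‖((V * U) ^ (n + 1)) x‖ = ‖V (((V * U) ^ n) (U x))‖ := by
        rw [pow_succ, ← mul_assoc, ← hcomm.eq, mul_assoc, mul_apply_eq_comp,
          mul_apply_eq_comp]
    _ ≤ ‖((V * U) ^ n) (U x)‖ := norm_apply_le_of_norm_le_one hV _

end Normed

variable {𝕜 E : Type*} [RCLike 𝕜] [NormedAddCommGroup E] [InnerProductSpace 𝕜 E]

theorem _root_.LinearMap.IsSymmetric.eq_of_re_inner_apply_self_eq {S T : E →ₗ[𝕜] E}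
    (hS : S.IsSymmetric) (hT : T.IsSymmetric)
    (h : ∀ x, re (inner 𝕜 (S x) x) = re (inner 𝕜 (T x) x)) : S = T := by
  rw [← sub_eq_zero, ← (hS.sub hT).inner_map_self_eq_zero]
  intro x
  rw [← (hS.sub hT).coe_re_inner_apply_self]
  simp [inner_sub_left, h]

variable [CompleteSpace E]

def IsAsymptoticLimit (T A : E →L[𝕜] E) : Prop :=
  ∀ x, Tendsto (fun n : ℕ => (T ^ n * adjoint (T ^ n)) x) atTop (𝓝 (A x))

variable {T A : E →L[𝕜] E}

theorem IsAsymptoticLimit.tendsto_norm_adjoint_pow_apply_sq (hA : IsAsymptoticLimit T A) (x : E) :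
    Tendsto (fun n : ℕ => ‖(adjoint T ^ n) x‖ ^ 2) atTop (𝓝 (re (inner 𝕜 (A x) x))) := by
  have hre : Tendsto (fun n : ℕ => re (inner 𝕜 ((T ^ n * adjoint (T ^ n)) x) x)) atTop
      (𝓝 (re (inner 𝕜 (A x) x))) :=
    (continuous_re.tendsto _).comp ((hA x).inner tendsto_const_nhds)
  convert hre using 2 with n
  rw [← star_eq_adjoint, ← star_pow, star_eq_adjoint, apply_norm_sq_eq_inner_adjoint_left,
    adjoint_adjoint]
  rfl

theorem IsAsymptoticLimit.mul_mul_adjoint_eq_of_commute {S R : E →L[𝕜] E}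
    (hA : IsAsymptoticLimit (S * R) A) (hAsa : IsSelfAdjoint A) (hS : ‖S‖ ≤ 1) (hR : ‖R‖ ≤ 1)
    (hSR : Commute S R) : S * A * adjoint S = A := by
  refine coe_injective <| LinearMap.IsSymmetric.eq_of_re_inner_apply_self_eq
    (hAsa.conjugate S).isSymmetric hAsa.isSymmetric fun x => ?_
  have hadj : adjoint (S * R) = adjoint R * adjoint S := by
    simp only [← star_eq_adjoint, star_mul]
  have hSR' : Commute (adjoint S) (adjoint R) := by
    simpa only [star_eq_adjoint] using hSR.star_star
  have hlim := hA.tendsto_norm_adjoint_pow_apply_sq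
  rw [hadj] at hlim
  have hmid := tendsto_of_tendsto_of_tendsto_of_le_of_le ((hlim x).comp (tendsto_add_atTop_nat 1))
    (hlim x)
    (fun n => pow_le_pow_left₀ (norm_nonneg _) (norm_pow_succ_apply_le_of_commute
      ((adjoint.norm_map _).trans_le hR) hSR' n x) 2)
    (fun n => pow_le_pow_left₀ (norm_nonneg _) (norm_pow_apply_le_of_commute
      ((adjoint.norm_map _).trans_le hS) hSR' n x) 2)
  rw [coe_coe, coe_coe, mul_apply_eq_comp, mul_apply_eq_comp, ← adjoint_inner_right]
  exact tendsto_nhds_unique (hlim (adjoint S x)) hmid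

end ContinuousLinearMap

/-- Let `T₁, T₂` be commuting contractions, `T = T₁T₂`, and let `A` be the positive operator
which is the strong limit of `Tⁿ T*ⁿ`.  Then `T₁ A T₁* = A` and `T₂ A T₂* = A`. -/
theorem asymptotic_limit_invariance {H : Type*} [NormedAddCommGroup H] [InnerProductSpace ℂ H]
    [CompleteSpace H] (T₁ T₂ A : H →L[ℂ] H)
    (hT₁ : ‖T₁‖ ≤ 1) (hT₂ : ‖T₂‖ ≤ 1) (hcomm : T₁ * T₂ = T₂ * T₁)
    (hApos : A.IsPositive)
    (hA : ∀ h : H, Tendsto (fun n : ℕ => ((T₁ * T₂) ^ n * adjoint ((T₁ * T₂) ^ n)) h)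
      atTop (nhds (A h))) :
    T₁ * A * adjoint T₁ = A ∧ T₂ * A * adjoint T₂ = A := by
  have hlim : IsAsymptoticLimit (T₁ * T₂) A := hA
  refine ⟨hlim.mul_mul_adjoint_eq_of_commute hApos.isSelfAdjoint hT₁ hT₂ hcomm, ?_⟩
  rw [hcomm] at hlim
  exact hlim.mul_mul_adjoint_eq_of_commute hApos.isSelfAdjoint hT₂ hT₁ hcomm.symm
end

section
/- Let V₁ and V₂ be commuting isometries on a complex Hilbert space H. Then, in the Hilbert space direct sum H ⊕ H, the closure of the set { (D_{V₁*}V₂*h, D_{V₂*}h) : h ∈ H } equals 𝒟_{V₁*} ⊕ 𝒟_{V₂*}, and likewise the closure of { (D_{V₁*}h, D_{V₂*}V₁*h) : h ∈ H } equals 𝒟_{V₁*} ⊕ 𝒟_{V₂*}. -/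
open ContinuousLinearMap

/-! The defect `D = D_{V*}` vanishes on the range of `V`, and `V*` has the right inverse `V`, so
`h := c + V₂ (a - V₂* c)` satisfies `V₂* h = a` and `D₂ h = D₂ c`: the set
`{(D₁ V₂* h, D₂ h)}` is already all of `ran D₁ × ran D₂`, and the closure of a product is the
product of the closures. The second set is the first one with the roles of the indices swapped. -/

theorem mul_eq_zero_of_mul_self_eq_one_sub_mul_star {A : Type*} [NormedRing A]
    [StarRing A] [CStarRing A] {v d : A} (hv : star v * v = 1) (hd : IsSelfAdjoint d)
    (hd2 : d * d = 1 - v * star v) : d * v = 0 := by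
  rw [← CStarRing.star_mul_self_eq_zero_iff]
  calc star (d * v) * (d * v) = star v * (d * d) * v := by
        rw [star_mul, hd.star_eq]; noncomm_ring
    _ = 0 := by rw [hd2, mul_sub, sub_mul, mul_one, hv, ← mul_assoc, hv, one_mul, hv, sub_self]

theorem range_prodMk_comp_eq_range_prod_range {E F G K 𝓕 𝓖 : Type*} [AddZeroClass E]
    [AddCommGroup F] [AddZeroClass G] [FunLike 𝓕 E F] [AddMonoidHomClass 𝓕 E F]
    [FunLike 𝓖 E G] [AddMonoidHomClass 𝓖 E G] {W : 𝓕} {D : 𝓖} {V : F → E}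
    (hWV : Function.LeftInverse W V) (hDV : ∀ x, D (V x) = 0) (A : F → K) :
    Set.range (fun h => (A (W h), D h)) = Set.range A ×ˢ Set.range D := by
  refine subset_antisymm (Set.range_subset_iff.2 fun h => ⟨⟨W h, rfl⟩, ⟨h, rfl⟩⟩) ?_
  rintro ⟨_, _⟩ ⟨⟨a, rfl⟩, ⟨c, rfl⟩⟩
  refine ⟨c + V (a - W c), ?_⟩
  simp only [map_add, hWV (a - W c), hDV, add_sub_cancel, add_zero]

theorem WithLp.closure_setOf_exists_eq_toLp_prod {p : ENNReal} {ι α β : Type*}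
    [TopologicalSpace α] [TopologicalSpace β] (f : ι → α) (g : ι → β) :
    closure {x : WithLp p (α × β) | ∃ i, x = (WithLp.equiv p (α × β)).symm (f i, g i)} =
      WithLp.equiv p (α × β) ⁻¹' closure (Set.range fun i => (f i, g i)) := by
  have : {x : WithLp p (α × β) | ∃ i, x = (WithLp.equiv p (α × β)).symm (f i, g i)} =
      WithLp.homeomorphProd p α β ⁻¹' Set.range fun i => (f i, g i) := by
    ext x
    exact exists_congr fun i => (Equiv.eq_symm_apply _).trans eq_comm
  rw [this, ← Homeomorph.preimage_closure]
  rfl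

theorem defect_range_of_commuting_isometries_general {H : Type*} [NormedAddCommGroup H]
    [InnerProductSpace ℂ H] [CompleteSpace H] (V₁ V₂ D₁ D₂ : H →L[ℂ] H)
    (hV₁ : adjoint V₁ * V₁ = 1) (hV₂ : adjoint V₂ * V₂ = 1)
    (hD₁pos : D₁.IsPositive) (hD₁sq : D₁ * D₁ = 1 - V₁ * adjoint V₁)
    (hD₂pos : D₂.IsPositive) (hD₂sq : D₂ * D₂ = 1 - V₂ * adjoint V₂) :
    closure {x : HilbertProd H | ∃ h : H, x = pairL2 (D₁ (adjoint V₂ h)) (D₂ h)} =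
      {x : HilbertProd H | (WithLp.equiv 2 (H × H) x).1 ∈ closure (Set.range D₁) ∧
        (WithLp.equiv 2 (H × H) x).2 ∈ closure (Set.range D₂)} ∧
    closure {x : HilbertProd H | ∃ h : H, x = pairL2 (D₁ h) (D₂ (adjoint V₁ h))} =
      {x : HilbertProd H | (WithLp.equiv 2 (H × H) x).1 ∈ closure (Set.range D₁) ∧
        (WithLp.equiv 2 (H × H) x).2 ∈ closure (Set.range D₂)} := by
  have hD₁V₁ : ∀ x, D₁ (V₁ x) = 0 := fun x => congr($(mul_eq_zero_of_mul_self_eq_one_sub_mul_star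
    hV₁ hD₁pos.isSelfAdjoint hD₁sq) x)
  have hD₂V₂ : ∀ x, D₂ (V₂ x) = 0 := fun x => congr($(mul_eq_zero_of_mul_self_eq_one_sub_mul_star
    hV₂ hD₂pos.isSelfAdjoint hD₂sq) x)
  have hrange₁ : Set.range (fun h => (D₁ (adjoint V₂ h), D₂ h)) = Set.range D₁ ×ˢ Set.range D₂ :=
    range_prodMk_comp_eq_range_prod_range (W := adjoint V₂) (fun x => congr($hV₂ x)) hD₂V₂ D₁
  have hrange₂ : Set.range (fun h => (D₁ h, D₂ (adjoint V₁ h))) = Set.range D₁ ×ˢ Set.range D₂ := by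
    rw [← Set.image_swap_prod, ← range_prodMk_comp_eq_range_prod_range
      (W := adjoint V₁) (fun x => congr($hV₁ x)) hD₁V₁ D₂, ← Set.range_comp]
    rfl
  simp only [WithLp.closure_setOf_exists_eq_toLp_prod, hrange₁, hrange₂, closure_prod_eq]
  exact ⟨rfl, rfl⟩

/-- For commuting isometries `V₁, V₂`, in the Hilbert space direct sum `H ⊕ H` the closure of
`{(D_{V₁*}V₂*h, D_{V₂*}h) : h ∈ H}` equals `𝒟_{V₁*} ⊕ 𝒟_{V₂*}`, and likewise the closure of
`{(D_{V₁*}h, D_{V₂*}V₁*h) : h ∈ H}` equals `𝒟_{V₁*} ⊕ 𝒟_{V₂*}`. -/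
theorem defect_range_of_commuting_isometries {H : Type*} [NormedAddCommGroup H]
    [InnerProductSpace ℂ H] [CompleteSpace H] (V₁ V₂ D₁ D₂ : H →L[ℂ] H)
    (hV₁ : adjoint V₁ * V₁ = 1) (hV₂ : adjoint V₂ * V₂ = 1) (hcomm : V₁ * V₂ = V₂ * V₁)
    (hD₁pos : D₁.IsPositive) (hD₁sq : D₁ * D₁ = 1 - V₁ * adjoint V₁)
    (hD₂pos : D₂.IsPositive) (hD₂sq : D₂ * D₂ = 1 - V₂ * adjoint V₂) :
    closure {x : HilbertProd H | ∃ h : H, x = pairL2 (D₁ (adjoint V₂ h)) (D₂ h)} =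
      {x : HilbertProd H | (WithLp.equiv 2 (H × H) x).1 ∈ closure (Set.range D₁) ∧
        (WithLp.equiv 2 (H × H) x).2 ∈ closure (Set.range D₂)} ∧
    closure {x : HilbertProd H | ∃ h : H, x = pairL2 (D₁ h) (D₂ (adjoint V₁ h))} =
      {x : HilbertProd H | (WithLp.equiv 2 (H × H) x).1 ∈ closure (Set.range D₁) ∧
        (WithLp.equiv 2 (H × H) x).2 ∈ closure (Set.range D₂)} :=
  defect_range_of_commuting_isometries_general V₁ V₂ D₁ D₂ hV₁ hV₂ hD₁pos hD₁sq hD₂pos hD₂sq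
end

section
/- Let V₁ and V₂ be commuting isometries on a complex Hilbert space H, let V = V₁V₂, and let M := ⋂_{n ∈ ℕ} range(Vⁿ). Then M is a closed subspace of H which is invariant under V₁, V₂, V₁* and V₂*, and the restrictions of V₁ and V₂ to M are unitary, i.e. V₁(M) = M and V₂(M) = M. -/
/-!
Each power `Vⁿ` of `V = V₁V₂` is an isometry, so its range is closed, and `M` is an intersection
of closed subspaces. An operator commuting with `V` preserves every `range Vⁿ`; this covers `V₁`
and `V₂`. Since `V₁*V₁ = 1` and `Vⁿ⁺¹ = V₁ Vⁿ V₂`, the adjoint `V₁*` maps `range Vⁿ⁺¹` into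
`range Vⁿ`, hence preserves `M`. Finally `M ⊆ range V₁`, where `V₁V₁*` is the identity, so `V₁`
maps `M` onto `M`. Writing `V = V₂V₁` gives the same for `V₂`.
-/

open Set

theorem mul_pow_succ_eq_pow_mul_of_mul_eq_one {M : Type*} [Monoid M] {a a' b : M}
    (h : a' * a = 1) (hab : Commute a b) (n : ℕ) :
    a' * (a * b) ^ (n + 1) = (a * b) ^ n * b := by
  rw [pow_succ', ← mul_assoc, ← mul_assoc, h, one_mul]
  exact ((hab.symm.mul_right (Commute.refl b)).pow_right n).eq

namespace ContinuousLinearMap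

section Algebraic

variable {R E : Type*} [Semiring R] [AddCommMonoid E] [Module R E] [TopologicalSpace E]

def iInfRangePow (T : E →L[R] E) : Submodule R E :=
  ⨅ n : ℕ, LinearMap.range ((T ^ n : E →L[R] E) : E →ₗ[R] E)

variable {T A A' B : E →L[R] E}

theorem mem_iInfRangePow {x : E} : x ∈ T.iInfRangePow ↔ ∀ n : ℕ, ∃ y, (T ^ n) y = x := by
  simp only [iInfRangePow, Submodule.mem_iInf, LinearMap.mem_range, coe_coe]

theorem mapsTo_iInfRangePow_of_commute (h : Commute A T) :
    MapsTo A T.iInfRangePow T.iInfRangePow := fun x hx => mem_iInfRangePow.2 fun n => by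
  obtain ⟨y, rfl⟩ := mem_iInfRangePow.1 hx n
  exact ⟨A y, by rw [← mul_apply_eq_comp, ← mul_apply_eq_comp, (h.pow_right n).eq]⟩

theorem mapsTo_iInfRangePow_mul_of_mul_eq_one (h : A' * A = 1) (hAB : Commute A B) :
    MapsTo A' (A * B).iInfRangePow (A * B).iInfRangePow := fun x hx =>
  mem_iInfRangePow.2 fun n => by
    obtain ⟨y, rfl⟩ := mem_iInfRangePow.1 hx (n + 1)
    exact ⟨B y, by
      rw [← mul_apply_eq_comp, ← mul_apply_eq_comp, mul_pow_succ_eq_pow_mul_of_mul_eq_one h hAB]⟩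

theorem image_iInfRangePow_mul_of_mul_eq_one (h : A' * A = 1) (hAB : Commute A B) :
    A '' (A * B).iInfRangePow = (A * B).iInfRangePow := by
  refine SurjOn.image_eq_of_mapsTo ?_
    (mapsTo_iInfRangePow_of_commute ((Commute.refl A).mul_right hAB))
  refine LeftInvOn.surjOn (fun x hx => ?_) (mapsTo_iInfRangePow_mul_of_mul_eq_one h hAB)
  obtain ⟨y, rfl⟩ := mem_iInfRangePow.1 hx 1
  rw [pow_one, mul_apply_eq_comp, ← mul_apply_eq_comp A', h, one_apply_eq_self]

end Algebraic

theorem isometry_pow {R E : Type*} [Semiring R] [SeminormedAddCommGroup E] [Module R E]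
    {T : E →L[R] E} (hT : Isometry T) (n : ℕ) : Isometry (T ^ n) := by
  induction n with
  | zero => exact isometry_id
  | succ n ih => rw [pow_succ, FunLike.coe_mul_eq_comp]; exact ih.comp hT

theorem isClosed_iInfRangePow {R E : Type*} [Semiring R] [NormedAddCommGroup E] [Module R E]
    [CompleteSpace E] {T : E →L[R] E} (hT : Isometry T) : IsClosed (T.iInfRangePow : Set E) := by
  rw [iInfRangePow, Submodule.coe_iInf]
  exact isClosed_iInter fun n => (isometry_pow hT n).isClosedEmbedding.isClosed_range

theorem isometry_of_adjoint_mul_self {𝕜 E : Type*} [RCLike 𝕜] [NormedAddCommGroup E]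
    [InnerProductSpace 𝕜 E] [CompleteSpace E] {T : E →L[𝕜] E} (h : adjoint T * T = 1) :
    Isometry T :=
  AddMonoidHomClass.isometry_of_norm T (T.norm_map_iff_adjoint_comp_self.2 h)

end ContinuousLinearMap

open ContinuousLinearMap

/-- For commuting isometries `V₁, V₂` with `V = V₁V₂`, the subspace
`M = ⋂ₙ range (Vⁿ)` is closed, invariant under `V₁, V₂, V₁*, V₂*`, and the restrictions of
`V₁` and `V₂` to `M` are unitary, i.e. `V₁(M) = M` and `V₂(M) = M`. -/
theorem unitary_part_of_commuting_isometries {H : Type*} [NormedAddCommGroup H]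
    [InnerProductSpace ℂ H] [CompleteSpace H] (V₁ V₂ : H →L[ℂ] H)
    (hV₁ : adjoint V₁ * V₁ = 1) (hV₂ : adjoint V₂ * V₂ = 1) (hcomm : V₁ * V₂ = V₂ * V₁)
    (M : Submodule ℂ H) (hM : M = ⨅ n : ℕ, LinearMap.range (((V₁ * V₂) ^ n : H →L[ℂ] H) : H →ₗ[ℂ] H)) :
    IsClosed (M : Set H) ∧
    (∀ x ∈ M, V₁ x ∈ M) ∧ (∀ x ∈ M, V₂ x ∈ M) ∧
    (∀ x ∈ M, adjoint V₁ x ∈ M) ∧ (∀ x ∈ M, adjoint V₂ x ∈ M) ∧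
    V₁ '' (M : Set H) = (M : Set H) ∧ V₂ '' (M : Set H) = (M : Set H) := by
  replace hM : M = (V₁ * V₂).iInfRangePow := hM
  subst hM
  have hC : Commute V₁ V₂ := hcomm
  have hV : Isometry (V₁ * V₂) :=
    (isometry_of_adjoint_mul_self hV₁).comp (isometry_of_adjoint_mul_self hV₂)
  refine ⟨isClosed_iInfRangePow hV,
    fun _ hx => mapsTo_iInfRangePow_of_commute ((Commute.refl V₁).mul_right hC) hx,
    fun _ hx => mapsTo_iInfRangePow_of_commute (hC.symm.mul_right (Commute.refl V₂)) hx,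
    fun _ hx => mapsTo_iInfRangePow_mul_of_mul_eq_one hV₁ hC hx, ?_,
    image_iInfRangePow_mul_of_mul_eq_one hV₁ hC, ?_⟩
  all_goals rw [hcomm]
  · exact fun _ hx => mapsTo_iInfRangePow_mul_of_mul_eq_one hV₂ hC.symm hx
  · exact image_iInfRangePow_mul_of_mul_eq_one hV₂ hC.symm
end
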